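/- Fix integers n ≥ 4 and 1 ≤ k ≤ n−1. If E : ℤ² × {0,1} → ℝ satisfies the pentagram square relation and is (n,k)-periodic, then the monomial Z is independent of the base point: Z(p) = Z(q) for all p, q ∈ ℤ². (Invariance of the first invariant Z(n,k) under all allowable translations.) -/

import Mathlib

/-!
The square relation lets a monotone lattice path be flipped across a unit square without changing
the product of its labels, so the product along a monotone path depends only on its endpoints.
Put `v = (n+k, n)`. Then `Z(p)` and `Z(p + (1,0))` are the labels `E(p,0)` and `E(p+v,0)`
respectively, times the product along one and the same monotone path from `p + (1,0)` to `p + v`;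
periodicity identifies the two labels. The same argument with a vertical first step gives
`Z(p + (0,1)) = Z(p)`, and no division by a possibly vanishing label is ever needed.
-/

/-- The pentagram square relation for an edge labeling `E`. -/
def PentagramRel (E : ℤ × ℤ → Fin 2 → ℝ) : Prop :=
  ∀ p : ℤ × ℤ, E p 0 * E (p + (1, 0)) 1 = E p 1 * E (p + (0, 1)) 0

/-- `(n,k)`-periodicity of a labeling: invariance under translation by `(n+k, n)`. -/
def PeriodicNK (n k : ℕ) (E : ℤ × ℤ → Fin 2 → ℝ) : Prop :=
  ∀ (p : ℤ × ℤ) (ε : Fin 2), E (p + ((n : ℤ) + (k : ℤ), (n : ℤ))) ε = E p ε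

/-- The monomial `Z(p)`: the product of the labels along the monotone lattice path
from `p` to `p + (n+k, n)` consisting of all `+(1,0)` steps followed by all
`+(0,1)` steps. -/
def Zinv (n k : ℕ) (E : ℤ × ℤ → Fin 2 → ℝ) (p : ℤ × ℤ) : ℝ :=
  (∏ i ∈ Finset.range (n + k), E (p + ((i : ℤ), 0)) 0) *
    (∏ j ∈ Finset.range n, E (p + ((n : ℤ) + (k : ℤ), (j : ℤ))) 1)

open Finset

theorem apply_eq_of_periodic_one_zero_of_periodic_zero_one {α : Type*} {f : ℤ × ℤ → α}
    (h₁ : Function.Periodic f (1, 0)) (h₂ : Function.Periodic f (0, 1)) (p q : ℤ × ℤ) :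
    f p = f q := by
  have hq : q = p + (q.1 - p.1) • (1, 0) + (q.2 - p.2) • (0, 1) := by ext <;> simp
  rw [hq, h₂.zsmul, h₁.zsmul]

namespace PentagramLabeling

variable (E : ℤ × ℤ → Fin 2 → ℝ)

def rowProd (a : ℤ × ℤ) (m : ℕ) : ℝ := ∏ i ∈ range m, E (a + ((i : ℤ), 0)) 0

def colProd (a : ℤ × ℤ) (r : ℕ) : ℝ := ∏ j ∈ range r, E (a + (0, (j : ℤ))) 1

variable {E}

theorem rowProd_succ (a : ℤ × ℤ) (m : ℕ) :
    rowProd E a (m + 1) = rowProd E a m * E (a + ((m : ℤ), 0)) 0 :=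
  prod_range_succ _ _

theorem rowProd_succ' (a : ℤ × ℤ) (m : ℕ) :
    rowProd E a (m + 1) = E a 0 * rowProd E (a + (1, 0)) m := by
  rw [rowProd, prod_range_succ', mul_comm]
  congr 1
  · simp [Prod.mk_zero_zero]
  · refine prod_congr rfl fun i _ => congrArg (E · 0) ?_
    ext <;> simp; ring

theorem colProd_succ (a : ℤ × ℤ) (r : ℕ) :
    colProd E a (r + 1) = colProd E a r * E (a + (0, (r : ℤ))) 1 :=
  prod_range_succ _ _

theorem colProd_succ' (a : ℤ × ℤ) (r : ℕ) :
    colProd E a (r + 1) = E a 1 * colProd E (a + (0, 1)) r := by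
  rw [colProd, prod_range_succ', mul_comm]
  congr 1
  · simp [Prod.mk_zero_zero]
  · refine prod_congr rfl fun j _ => congrArg (E · 1) ?_
    ext <;> simp; ring

theorem Zinv_eq_rowProd_mul_colProd (n k : ℕ) (p : ℤ × ℤ) :
    Zinv n k E p = rowProd E p (n + k) * colProd E (p + (((n + k : ℕ) : ℤ), 0)) n := by
  refine congrArg _ (prod_congr rfl fun j _ => congrArg (E · 1) ?_)
  ext <;> simp

variable (hE : PentagramRel E)
include hE

theorem mul_colProd_of_pentagramRel (r : ℕ) (a : ℤ × ℤ) :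
    E a 0 * colProd E (a + (1, 0)) r = colProd E a r * E (a + (0, (r : ℤ))) 0 := by
  induction r generalizing a with
  | zero => simp [colProd, Prod.mk_zero_zero]
  | succ r ih =>
    rw [colProd_succ', colProd_succ', ← mul_assoc, hE a,
      show a + (1, 0) + (0, 1) = a + (0, 1) + (1, 0) by abel, mul_assoc, ih,
      show a + (0, 1) + (0, (r : ℤ)) = a + (0, ((r + 1 : ℕ) : ℤ)) by ext <;> simp; ring]
    ring

theorem rowProd_mul_colProd (m r : ℕ) (a : ℤ × ℤ) :
    rowProd E a m * colProd E (a + ((m : ℤ), 0)) r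
      = colProd E a r * rowProd E (a + (0, (r : ℤ))) m := by
  induction m with
  | zero => simp [rowProd, Prod.mk_zero_zero]
  | succ m ih =>
    rw [rowProd_succ, rowProd_succ, mul_assoc,
      show a + (((m + 1 : ℕ) : ℤ), 0) = a + ((m : ℤ), 0) + (1, 0) by ext <;> simp; ring,
      mul_colProd_of_pentagramRel hE, ← mul_assoc, ih, mul_assoc,
      show a + ((m : ℤ), 0) + (0, (r : ℤ)) = a + (0, (r : ℤ)) + ((m : ℤ), 0) by abel]

theorem mul_rowProd_of_pentagramRel (m : ℕ) (a : ℤ × ℤ) :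
    E a 1 * rowProd E (a + (0, 1)) m = rowProd E a m * E (a + ((m : ℤ), 0)) 1 := by
  simpa [colProd, Prod.mk_zero_zero] using (rowProd_mul_colProd hE m 1 a).symm

theorem Zinv_eq_colProd_mul_rowProd (n k : ℕ) (p : ℤ × ℤ) :
    Zinv n k E p = colProd E p n * rowProd E (p + (0, (n : ℤ))) (n + k) := by
  rw [Zinv_eq_rowProd_mul_colProd, rowProd_mul_colProd hE]

variable {n k : ℕ} (hper : PeriodicNK n k E)
include hper

theorem periodic_Zinv_one_zero (hnk : 0 < n + k) : Function.Periodic (Zinv n k E) (1, 0) := by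
  intro p
  obtain ⟨M, hM⟩ := Nat.exists_eq_add_one_of_ne_zero hnk.ne'
  set a := p + (1, 0)
  have hcorner : E (a + ((M : ℤ), 0) + (0, (n : ℤ))) 0 = E p 0 := by
    rw [← hper p 0]; congr 1; ext <;> simp [a]; omega
  rw [Zinv_eq_rowProd_mul_colProd, Zinv_eq_rowProd_mul_colProd, hM, rowProd_succ, rowProd_succ',
    show a + (((M + 1 : ℕ) : ℤ), 0) = a + ((M : ℤ), 0) + (1, 0) by ext <;> simp; ring,
    show p + (((M + 1 : ℕ) : ℤ), 0) = a + ((M : ℤ), 0) by ext <;> simp [a]; ring,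
    mul_assoc, mul_colProd_of_pentagramRel hE, hcorner]
  ring

theorem periodic_Zinv_zero_one (hn : 0 < n) : Function.Periodic (Zinv n k E) (0, 1) := by
  intro p
  obtain ⟨R, rfl⟩ := Nat.exists_eq_add_one_of_ne_zero hn.ne'
  set a := p + (0, 1)
  have hcorner : E (a + (0, (R : ℤ)) + (((R + 1 + k : ℕ) : ℤ), 0)) 1 = E p 1 := by
    rw [← hper p 1]; congr 1; ext <;> simp [a]; ring
  rw [Zinv_eq_colProd_mul_rowProd hE, Zinv_eq_colProd_mul_rowProd hE, colProd_succ, colProd_succ',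
    show a + (0, (((R + 1 : ℕ) : ℤ))) = a + (0, (R : ℤ)) + (0, 1) by ext <;> simp; ring,
    show p + (0, (((R + 1 : ℕ) : ℤ))) = a + (0, (R : ℤ)) by ext <;> simp [a]; ring,
    mul_assoc, mul_rowProd_of_pentagramRel hE, hcorner]
  ring

end PentagramLabeling

theorem Zinv_basepoint_independent_general (n k : ℕ) (hn : 4 ≤ n)
    (E : ℤ × ℤ → Fin 2 → ℝ) (hE : PentagramRel E) (hper : PeriodicNK n k E)
    (p q : ℤ × ℤ) :
    Zinv n k E p = Zinv n k E q :=
  apply_eq_of_periodic_one_zero_of_periodic_zero_one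
    (PentagramLabeling.periodic_Zinv_one_zero hE hper (by omega))
    (PentagramLabeling.periodic_Zinv_zero_one hE hper (by omega)) p q

/-- The invariant `Z(n,k)` is independent of the base point. -/
theorem Zinv_basepoint_independent (n k : ℕ) (hn : 4 ≤ n) (hk1 : 1 ≤ k) (hkn : k ≤ n - 1)
    (E : ℤ × ℤ → Fin 2 → ℝ) (hE : PentagramRel E) (hper : PeriodicNK n k E)
    (p q : ℤ × ℤ) :
    Zinv n k E p = Zinv n k E q :=
  Zinv_basepoint_independent_general n k hn E hE hper p q
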